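/- A point x ∈ X belongs to the projected Aubry set A if and only if the function φ_x = φ(x,·) is a negative weak KAM solution, i.e. φ_x = T⁻φ_x + α[0] on all of X. -/

import Mathlib

open Metric Set Filter Topology

/-- `X` is a `B`-length space at scale `K`. -/
def IsBLengthSpaceAtScale (X : Type*) [MetricSpace X] (B K : ℝ) : Prop :=
  ∀ x y : X, ∃ (n : ℕ) (p : ℕ → X), p 0 = x ∧ p n = y ∧
    (∀ i < n, dist (p i) (p (i + 1)) ≤ K) ∧
    ∑ i ∈ Finset.range n, dist (p i) (p (i + 1)) ≤ B * dist x y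

/-- Uniform superlinearity of the cost `c`. -/
def UniformlySuperlinear {X : Type*} [MetricSpace X] (c : X → X → ℝ) : Prop :=
  ∀ k : ℝ, 0 ≤ k → ∃ C : ℝ, ∀ x y : X, k * dist x y - C ≤ c x y

/-- Uniform boundedness of the cost `c`. -/
def UniformlyBounded {X : Type*} [MetricSpace X] (c : X → X → ℝ) : Prop :=
  ∀ R : ℝ, ∃ A : ℝ, ∀ x y : X, dist x y ≤ R → c x y ≤ A

/-- `u` is `α`-dominated: `u y - u x ≤ c x y + α` for all `x y`. -/
def Dominated {X : Type*} (c : X → X → ℝ) (α : ℝ) (u : X → ℝ) : Prop :=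
  ∀ x y : X, u y - u x ≤ c x y + α

/-- Negative Lax-Oleinik semigroup. -/
noncomputable def Tm {X : Type*} (c : X → X → ℝ) (u : X → ℝ) (x : X) : ℝ :=
  ⨅ y, (u y + c y x)

/-- Positive Lax-Oleinik semigroup. -/
noncomputable def Tp {X : Type*} (c : X → X → ℝ) (u : X → ℝ) (x : X) : ℝ :=
  ⨆ y, (u y - c x y)

/-- The critical constant `α[0]`: the smallest `α` for which `α`-dominated functions exist. -/
noncomputable def critValue {X : Type*} (c : X → X → ℝ) : ℝ :=
  sInf {α : ℝ | ∃ u : X → ℝ, Dominated c α u}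

/-- The Mañé potential `φ(x,y) = sup_u (u y - u x)`, sup over critical sub-solutions. -/
noncomputable def mane {X : Type*} (c : X → X → ℝ) (x y : X) : ℝ :=
  sSup {r : ℝ | ∃ u : X → ℝ, Dominated c (critValue c) u ∧ r = u y - u x}

/-- A bi-infinite sequence is `(u,c,α)`-calibrated if all its finite subchains of
consecutive terms are calibrated. -/
def IsCalibrated {X : Type*} (c : X → X → ℝ) (α : ℝ) (u : X → ℝ) (x : ℤ → X) : Prop :=
  ∀ (m : ℤ) (k : ℕ), u (x (m + k)) =
    u (x m) + (∑ i ∈ Finset.range k, c (x (m + i)) (x (m + i + 1))) + k * α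

/-- The projected Aubry set of a critical sub-solution `u`. -/
def projAubry {X : Type*} (c : X → X → ℝ) (u : X → ℝ) : Set X :=
  {p : X | ∃ x : ℤ → X, IsCalibrated c (critValue c) u x ∧ x 0 = p}

/-- The set `Â_u` of pairs of consecutive terms of calibrated bi-infinite sequences. -/
def aubryPairs {X : Type*} (c : X → X → ℝ) (u : X → ℝ) : Set (X × X) :=
  {q : X × X | ∃ (x : ℤ → X) (n : ℤ),
    IsCalibrated c (critValue c) u x ∧ x n = q.1 ∧ x (n + 1) = q.2}

/-- The projected Aubry set `A = ∩_u A_u`, intersection over all critical sub-solutions. -/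
def projAubrySet {X : Type*} (c : X → X → ℝ) : Set X :=
  {p : X | ∀ u : X → ℝ, Dominated c (critValue c) u → p ∈ projAubry c u}

/-- The Aubry pair set `Â = ∩_u Â_u`, intersection over all critical sub-solutions. -/
def aubryPairsSet {X : Type*} (c : X → X → ℝ) : Set (X × X) :=
  {q : X × X | ∀ u : X → ℝ, Dominated c (critValue c) u → q ∈ aubryPairs c u}

/-- `c_n(x,y)`: infimum of total cost over chains of length `n` from `x` to `y`. -/
noncomputable def cChain {X : Type*} (c : X → X → ℝ) (n : ℕ) (x y : X) : ℝ :=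
  sInf {r : ℝ | ∃ p : ℕ → X, p 0 = x ∧ p n = y ∧
    r = ∑ i ∈ Finset.range n, c (p i) (p (i + 1))}

/-- `φ_n(x,y) = inf_{k ≥ n} (c_k(x,y) + k·α)`. -/
noncomputable def phiN {X : Type*} (c : X → X → ℝ) (α : ℝ) (n : ℕ) (x y : X) : ℝ :=
  sInf {r : ℝ | ∃ k : ℕ, n ≤ k ∧ r = cChain c k x y + k * α}

/-- The Peierls barrier, with values in the extended reals. -/
noncomputable def peierls {X : Type*} (c : X → X → ℝ) (α : ℝ) (x y : X) : EReal :=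
  Filter.liminf (fun n : ℕ => ((cChain c n x y + n * α : ℝ) : EReal)) Filter.atTop

/-- Negative Lax-Oleinik semigroup on extended-real-valued functions. -/
noncomputable def eTm {X : Type*} (c : X → X → ℝ) (u : X → EReal) (x : X) : EReal :=
  ⨅ y, (u y + (c y x : EReal))

/-- Positive Lax-Oleinik semigroup on extended-real-valued functions. -/
noncomputable def eTp {X : Type*} (c : X → X → ℝ) (u : X → EReal) (x : X) : EReal :=
  ⨆ y, (u y - (c x y : EReal))

/-!
Since `mane c a b` is a supremum over critical sub-solutions, it is bounded by the critical cost
of every chain from `a` to `b`, satisfies the triangle inequality, and `mane c a` is itself a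
critical sub-solution; conversely there are chains of critical cost arbitrarily close to
`mane c a b`. As `T⁻` maps critical sub-solutions to critical sub-solutions, `mane c x` is a weak
KAM solution as soon as the equation holds at `x`, that is, as soon as there are loops at `x` of
arbitrarily small critical cost.

A calibrated sequence through `x` contains a loop of cost zero. Conversely, take loops at `x` of
cost tending to zero and extend them periodically to `ℤ`. Sub-solutions grow at most linearly at
large scale (this is where the length structure and the bound on `c` enter), so superlinearity
bounds the steps of these loops uniformly. By properness they converge pointwise along an
ultrafilter. Every segment of the limit closes up, through the nearby loops, to a loop of
critical cost at most zero, which forces every critical sub-solution to be calibrated along it.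
-/

open Finset

section Chains

variable {X : Type*} {c : X → X → ℝ} {α : ℝ}

def chainCost (c : X → X → ℝ) (α : ℝ) (y : ℤ → X) (m : ℤ) (k : ℕ) : ℝ :=
  ∑ i ∈ range k, (c (y (m + i)) (y (m + i + 1)) + α)

@[simp]
lemma chainCost_zero (y : ℤ → X) (m : ℤ) : chainCost c α y m 0 = 0 := by
  simp [chainCost]

@[simp]
lemma chainCost_one (y : ℤ → X) (m : ℤ) :
    chainCost c α y m 1 = c (y m) (y (m + 1)) + α := by
  simp [chainCost]

lemma chainCost_succ (y : ℤ → X) (m : ℤ) (k : ℕ) :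
    chainCost c α y m (k + 1) = chainCost c α y m k + (c (y (m + k)) (y (m + k + 1)) + α) :=
  sum_range_succ _ _

lemma chainCost_add (y : ℤ → X) (m : ℤ) (k l : ℕ) :
    chainCost c α y m (k + l) = chainCost c α y m k + chainCost c α y (m + k) l := by
  simp only [chainCost, sum_range_add, Nat.cast_add, add_assoc]

lemma chainCost_sub_one_add_two (y : ℤ → X) (m : ℤ) (k : ℕ) :
    chainCost c α y (m - 1) (k + 2) =
      (c (y (m - 1)) (y m) + α) + chainCost c α y m k + (c (y (m + k)) (y (m + k + 1)) + α) := by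
  rw [show k + 2 = 1 + k + 1 by omega, chainCost_succ, chainCost_add, chainCost_one]
  simp only [Nat.cast_add, Nat.cast_one, sub_add_cancel]
  ring_nf

lemma isCalibrated_iff {u : X → ℝ} {y : ℤ → X} :
    IsCalibrated c α u y ↔
      ∀ (m : ℤ) (k : ℕ), u (y (m + k)) = u (y m) + chainCost c α y m k := by
  simp only [IsCalibrated, chainCost, sum_add_distrib, sum_const, card_range, nsmul_eq_mul,
    add_assoc]

lemma chainCost_periodic {y : ℤ → X} {n : ℕ} (hy : Function.Periodic y n) (m : ℤ) :
    chainCost c α y m n = chainCost c α y 0 n := by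
  have shift : ∀ m, chainCost c α y (m + 1) n = chainCost c α y m n := fun m => by
    have h := chainCost_add (c := c) (α := α) y m 1 n
    rw [add_comm 1 n, chainCost_succ, chainCost_one, Nat.cast_one] at h
    rw [hy m, add_right_comm, hy (m + 1)] at h
    linarith
  induction m using Int.induction_on with
  | zero => rfl
  | succ i ih => rw [shift, ih]
  | pred i ih => rw [← ih, ← shift, sub_add_cancel]

lemma chainCost_nat_mul_of_periodic {y : ℤ → X} {n : ℕ} (hy : Function.Periodic y n) (m : ℤ)
    (N : ℕ) : chainCost c α y m (N * n) = N * chainCost c α y 0 n := by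
  induction N with
  | zero => simp
  | succ N ih =>
    rw [add_mul, one_mul, chainCost_add, ih, chainCost_periodic hy (m + _)]
    push_cast
    ring

end Chains

section Domination

variable {X : Type*} {c : X → X → ℝ} {α : ℝ} {u : X → ℝ}

lemma Dominated.mono {β : ℝ} (hu : Dominated c α u) (h : α ≤ β) : Dominated c β u :=
  fun x y => (hu x y).trans (by linarith)

lemma Dominated.sub_le_chainCost (hu : Dominated c α u) (y : ℤ → X) (m : ℤ) (k : ℕ) :
    u (y (m + k)) - u (y m) ≤ chainCost c α y m k := by
  induction k with
  | zero => simp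
  | succ k ih =>
    have step := hu (y (m + k)) (y (m + k + 1))
    rw [chainCost_succ, Nat.cast_succ, ← add_assoc]
    linarith

lemma Dominated.chainCost_nonneg_of_loop (hu : Dominated c α u) {y : ℤ → X} {m : ℤ} {k : ℕ}
    (hy : y (m + k) = y m) : 0 ≤ chainCost c α y m k := by
  simpa [hy] using hu.sub_le_chainCost y m k

lemma Dominated.step_defect_le_chainCost (hu : Dominated c α u) {y : ℤ → X} {m : ℤ} {n : ℕ}
    (hn : 0 < n) (hy : y (m + n) = y m) :
    c (y m) (y (m + 1)) + α - (u (y (m + 1)) - u (y m)) ≤ chainCost c α y m n := by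
  obtain ⟨k, rfl⟩ := Nat.exists_eq_add_one_of_ne_zero hn.ne'
  have rest := hu.sub_le_chainCost y (m + 1) k
  rw [show y (m + 1 + k) = y m by rw [← hy]; push_cast; ring_nf] at rest
  rw [add_comm k 1, chainCost_add, chainCost_one, Nat.cast_one]
  linarith

lemma Dominated.le_tm_add (hu : Dominated c α u) (x : X) : u x ≤ Tm c u x + α := by
  have : Nonempty X := ⟨x⟩
  have : u x - α ≤ Tm c u x := le_ciInf fun y => by linarith [hu y x]
  linarith

lemma Dominated.tm_le (hu : Dominated c α u) (x y : X) : Tm c u x ≤ u y + c y x :=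
  ciInf_le ⟨u x - α, by rintro _ ⟨z, rfl⟩; linarith [hu z x]⟩ y

lemma Dominated.tm (hu : Dominated c α u) : Dominated c α (Tm c u) := fun x y => by
  linarith [hu.tm_le y x, hu.le_tm_add x]

end Domination

section ChainPotential

variable {X : Type*} {c : X → X → ℝ} {α : ℝ} {u : X → ℝ}

def chainCosts (c : X → X → ℝ) (α : ℝ) (a b : X) : Set ℝ :=
  {r | ∃ (y : ℤ → X) (k : ℕ), y 0 = a ∧ y k = b ∧ chainCost c α y 0 k = r}

noncomputable def chainPotential (c : X → X → ℝ) (α : ℝ) (a b : X) : ℝ :=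
  sInf (chainCosts c α a b)

lemma chainCosts_nonempty (a b : X) : (chainCosts c α a b).Nonempty :=
  ⟨_, fun i => if i = 0 then a else b, 1, by simp, by simp, rfl⟩

lemma Dominated.sub_le_of_mem_chainCosts (hu : Dominated c α u) {a b : X} {r : ℝ}
    (hr : r ∈ chainCosts c α a b) : u b - u a ≤ r := by
  obtain ⟨y, k, rfl, rfl, rfl⟩ := hr
  simpa using hu.sub_le_chainCost y 0 k

lemma Dominated.chainPotential_le (hu : Dominated c α u) {a b : X} {r : ℝ}
    (hr : r ∈ chainCosts c α a b) : chainPotential c α a b ≤ r :=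
  csInf_le ⟨u b - u a, fun _ => hu.sub_le_of_mem_chainCosts⟩ hr

lemma chainCost_update_succ (y : ℤ → X) (k : ℕ) (b : X) :
    chainCost c α (Function.update y (k + 1) b) 0 (k + 1) =
      chainCost c α y 0 k + (c (y k) b + α) := by
  rw [chainCost_succ]
  congr 1
  · refine sum_congr rfl fun i hi => ?_
    have hi : (i : ℤ) < k := by exact_mod_cast mem_range.1 hi
    rw [Function.update_of_ne (by omega), Function.update_of_ne (by omega)]
  · rw [zero_add, Function.update_self, Function.update_of_ne (by omega)]

lemma add_cost_mem_chainCosts {a z : X} {r : ℝ} (hr : r ∈ chainCosts c α a z) (b : X) :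
    r + (c z b + α) ∈ chainCosts c α a b := by
  obtain ⟨y, k, rfl, rfl, rfl⟩ := hr
  exact ⟨Function.update y (k + 1) b, k + 1, Function.update_of_ne (by omega) _ _, by simp,
    chainCost_update_succ y k b⟩

lemma dominated_chainPotential (hu : Dominated c α u) (a : X) :
    Dominated c α (chainPotential c α a) := fun z b => by
  have : chainPotential c α a b - (c z b + α) ≤ chainPotential c α a z :=
    le_csInf (chainCosts_nonempty a z) fun r hr => by
      linarith [hu.chainPotential_le (add_cost_mem_chainCosts hr b)]
  linarith

end ChainPotential

section Mane

variable {X : Type*} {c : X → X → ℝ} {u : X → ℝ}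

lemma le_mane (hu : Dominated c (critValue c) u) (a b : X) : u b - u a ≤ mane c a b :=
  le_csSup ⟨c a b + critValue c, by rintro _ ⟨v, hv, rfl⟩; exact hv a b⟩ ⟨u, hu, rfl⟩

lemma isCalibrated_of_chainCost_add_mane_nonpos (hu : Dominated c (critValue c) u)
    {y : ℤ → X} (hy : ∀ (m : ℤ) (k : ℕ),
      chainCost c (critValue c) y m k + mane c (y (m + k)) (y m) ≤ 0) :
    IsCalibrated c (critValue c) u y :=
  isCalibrated_iff.2 fun m k => by
    linarith [hu.sub_le_chainCost y m k, le_mane hu (y (m + k)) (y m), hy m k]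

variable (h₀ : ∃ u, Dominated c (critValue c) u)
include h₀

lemma mane_le_of_forall {a b : X} {r : ℝ}
    (h : ∀ u, Dominated c (critValue c) u → u b - u a ≤ r) : mane c a b ≤ r := by
  obtain ⟨u₀, hu₀⟩ := h₀
  exact csSup_le ⟨_, u₀, hu₀, rfl⟩ (by rintro _ ⟨v, hv, rfl⟩; exact h v hv)

lemma mane_le_cost_add (a b : X) : mane c a b ≤ c a b + critValue c :=
  mane_le_of_forall h₀ fun _ hu => hu a b

lemma mane_le_chainCost (y : ℤ → X) (m : ℤ) (k : ℕ) :
    mane c (y m) (y (m + k)) ≤ chainCost c (critValue c) y m k :=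
  mane_le_of_forall h₀ fun _ hu => hu.sub_le_chainCost y m k

lemma mane_le_mane_add_mane (a b e : X) : mane c a e ≤ mane c a b + mane c b e :=
  mane_le_of_forall h₀ fun u hu => by linarith [le_mane hu a b, le_mane hu b e]

lemma mane_self (a : X) : mane c a a = 0 := by
  obtain ⟨u₀, hu₀⟩ := h₀
  refine le_antisymm (mane_le_of_forall ⟨u₀, hu₀⟩ fun u _ => (sub_self _).le) ?_
  simpa using le_mane hu₀ a a

lemma dominated_mane (a : X) : Dominated c (critValue c) (mane c a) := fun z b => by
  linarith [mane_le_mane_add_mane h₀ a z b, mane_le_cost_add h₀ z b]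

lemma chainPotential_le_mane (a b : X) : chainPotential c (critValue c) a b ≤ mane c a b := by
  obtain ⟨u₀, hu₀⟩ := h₀
  have hself : chainPotential c (critValue c) a a ≤ 0 :=
    hu₀.chainPotential_le ⟨fun _ => a, 0, rfl, rfl, chainCost_zero _ _⟩
  linarith [le_mane (dominated_chainPotential hu₀ a) a b]

lemma exists_chainCost_lt_mane_add (a b : X) {ε : ℝ} (hε : 0 < ε) :
    ∃ (y : ℤ → X) (k : ℕ), y 0 = a ∧ y k = b ∧
      chainCost c (critValue c) y 0 k < mane c a b + ε := by
  obtain ⟨_, ⟨y, k, hy0, hyk, rfl⟩, hlt⟩ := exists_lt_of_csInf_lt (chainCosts_nonempty a b)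
    ((chainPotential_le_mane h₀ a b).trans_lt (lt_add_of_pos_right _ hε))
  exact ⟨y, k, hy0, hyk, hlt⟩

/-- The equation at `x` propagates to all of `X` because `T⁻ (mane c x)` is again a critical
sub-solution. -/
lemma forall_mane_eq_tm_add_iff (x : X) :
    (∀ y, mane c x y = Tm c (mane c x) y + critValue c) ↔
      Tm c (mane c x) x + critValue c ≤ 0 := by
  have hφ := dominated_mane h₀ x
  refine ⟨fun h => by linarith [h x, mane_self h₀ x], fun hx y => ?_⟩
  exact le_antisymm (hφ.le_tm_add y) (by linarith [le_mane hφ.tm x y])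

lemma tm_mane_add_nonpos_of_mem_projAubrySet {x : X} (hx : x ∈ projAubrySet c) :
    Tm c (mane c x) x + critValue c ≤ 0 := by
  obtain ⟨w, hw, rfl⟩ := hx (mane c x) (dominated_mane h₀ x)
  have hstep := (isCalibrated_iff.1 hw) (-1) 1
  simp only [Nat.cast_one, neg_add_cancel, chainCost_one, mane_self h₀] at hstep
  linarith [(dominated_mane h₀ (w 0)).tm_le (w 0) (w (-1))]

end Mane

section LargeScaleLipschitz

variable {X : Type*} [MetricSpace X]

/-- Invariant of the induction: for `t ≤ n` there is `j ≤ t` with `dist (p j) (p t) ≤ K` and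
`v (p j) - v (p 0) ≤ 2M/K · (length of p up to j)`; when the next step leaves the `K`-ball around
`p j`, the chain has travelled at least `K` since `j`, which pays for two jumps of cost `M`. -/
lemma sub_le_of_chain {v : X → ℝ} {K M : ℝ} (hK : 0 < K)
    (hv : ∀ a b, dist a b ≤ K → v b - v a ≤ M) (p : ℕ → X) (n : ℕ)
    (hp : ∀ i < n, dist (p i) (p (i + 1)) ≤ K) :
    v (p n) - v (p 0) ≤ 2 * M / K * ∑ i ∈ range n, dist (p i) (p (i + 1)) + M := by
  set L : ℕ → ℝ := fun t => ∑ i ∈ range t, dist (p i) (p (i + 1))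
  have hM : 0 ≤ M := by simpa using hv (p 0) (p 0) (by simp [hK.le])
  have hL_mono : Monotone L := fun s t hst =>
    sum_le_sum_of_subset_of_nonneg (range_subset_range.2 hst) fun _ _ _ => dist_nonneg
  have hdist : ∀ s t, s ≤ t → dist (p s) (p t) ≤ L t - L s := fun s t hst => by
    have := dist_le_Ico_sum_dist p hst
    simp only [L, ← sum_range_add_sum_Ico _ hst]
    linarith
  have key : ∀ t ≤ n, ∃ j ≤ t,
      dist (p j) (p t) ≤ K ∧ v (p j) - v (p 0) ≤ 2 * M / K * L j := by
    intro t
    induction t with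
    | zero => exact fun _ => ⟨0, le_rfl, by simp [hK.le], by simp [L]⟩
    | succ t ih =>
      intro ht
      obtain ⟨j, hjt, hjK, hj⟩ := ih (by omega)
      by_cases hfar : dist (p j) (p (t + 1)) ≤ K
      · exact ⟨j, by omega, hfar, hj⟩
      refine ⟨t + 1, le_rfl, by simp [hK.le], ?_⟩
      have htravel : K ≤ L (t + 1) - L j := by linarith [hdist j (t + 1) (by omega)]
      have hpay : 2 * M ≤ 2 * M / K * (L (t + 1) - L j) := by
        calc 2 * M = 2 * M / K * K := by field_simp
          _ ≤ _ := by gcongr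
      linarith [hv _ _ hjK, hv _ _ (hp t (by omega))]
  obtain ⟨j, hjn, hjK, hj⟩ := key n le_rfl
  have : 2 * M / K * L j ≤ 2 * M / K * L n := by gcongr; exact hL_mono hjn
  linarith [hv _ _ hjK]

lemma exists_sub_le_mul_dist_add {B K : ℝ} (hK : 0 < K) (hlen : IsBLengthSpaceAtScale X B K)
    {c : X → X → ℝ} (hub : UniformlyBounded c) (α : ℝ) :
    ∃ k C : ℝ, ∀ u, Dominated c α u → ∀ a b, u b - u a ≤ k * dist a b + C := by
  obtain ⟨A, hA⟩ := hub K
  set M := max (A + α) 0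
  refine ⟨2 * M / K * B, M, fun u hu a b => ?_⟩
  obtain ⟨n, p, rfl, rfl, hstep, hsum⟩ := hlen a b
  have hv : ∀ a b, dist a b ≤ K → u b - u a ≤ M := fun a b hab =>
    (hu a b).trans ((add_le_add_left (hA a b hab) α).trans (le_max_left _ _))
  have : 2 * M / K * ∑ i ∈ range n, dist (p i) (p (i + 1)) ≤
      2 * M / K * (B * dist (p 0) (p n)) := by gcongr
  linarith [sub_le_of_chain hK hv p n hstep]

end LargeScaleLipschitz

lemma Ultrafilter.exists_tendsto_of_forall_mem_isCompact {β ι Y : Type*} [TopologicalSpace Y]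
    (U : Ultrafilter β) {K : ι → Set Y} (hK : ∀ i, IsCompact (K i)) {f : β → ι → Y}
    (hf : ∀ j i, f j i ∈ K i) :
    ∃ g : ι → Y, ∀ i, Tendsto (fun j => f j i) U (𝓝 (g i)) := by
  obtain ⟨g, -, hg⟩ := (isCompact_univ_pi hK).ultrafilter_le_nhds (U.map f)
    (by rw [Ultrafilter.coe_map, le_principal_iff]
        exact mem_map.2 (univ_mem' fun j => mem_univ_pi.2 (hf j)))
  exact ⟨g, tendsto_pi_nhds.1 hg⟩

section CriticalSubsolution

variable {X : Type*} {c : X → X → ℝ}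

/-- Normalized at a base point, the `(α + ε)`-dominated functions with `ε ≤ 1` take values in
fixed compact intervals, so they have a pointwise limit along an ultrafilter. -/
lemma exists_dominated_of_forall_pos [Nonempty X] {α : ℝ}
    (h : ∀ ε > 0, ∃ u, Dominated c (α + ε) u) : ∃ u, Dominated c α u := by
  obtain ⟨x₀⟩ := ‹Nonempty X›
  choose u hu using fun n : ℕ => h (1 / (n + 1)) Nat.one_div_pos_of_nat
  have hε_le : ∀ n : ℕ, 1 / ((n : ℝ) + 1) ≤ 1 := fun n =>
    div_le_one_of_le₀ (by linarith [n.cast_nonneg (α := ℝ)]) (by positivity)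
  obtain ⟨U, hU⟩ := exists_ultrafilter_le (atTop : Filter ℕ)
  obtain ⟨v, hv⟩ := U.exists_tendsto_of_forall_mem_isCompact
    (K := fun y => Icc (-(c y x₀ + α + 1)) (c x₀ y + α + 1)) (fun _ => isCompact_Icc)
    (f := fun n y => u n y - u n x₀)
    (fun n y => ⟨by linarith [hu n y x₀, hε_le n], by linarith [hu n x₀ y, hε_le n]⟩)
  refine ⟨v, fun a b => le_of_tendsto_of_tendsto' ((hv b).sub (hv a))
    (g := fun n : ℕ => c a b + (α + 1 / (n + 1))) ?_ fun n => ?_⟩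
  · simpa [add_assoc] using (tendsto_const_nhds (x := c a b + α)).add
      ((tendsto_one_div_add_atTop_nhds_zero_nat (𝕜 := ℝ)).mono_left hU)
  · linarith [hu n a b]

lemma exists_dominated_critValue [MetricSpace X] [Nonempty X] (hsl : UniformlySuperlinear c) :
    ∃ u, Dominated c (critValue c) u := by
  obtain ⟨C, hC⟩ := hsl 0 le_rfl
  have hne : {α : ℝ | ∃ u : X → ℝ, Dominated c α u}.Nonempty :=
    ⟨C, 0, fun a b => by
      simp only [Pi.zero_apply, sub_self]
      linarith [hC a b, dist_nonneg (x := a) (y := b)]⟩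
  refine exists_dominated_of_forall_pos fun ε hε => ?_
  obtain ⟨β, ⟨u, hu⟩, hβ⟩ := Real.lt_sInf_add_pos hne hε
  exact ⟨u, hu.mono hβ.le⟩

end CriticalSubsolution

section PeriodicChains

variable {X : Type*} {c : X → X → ℝ} {α : ℝ}

lemma exists_periodic_chainCost_eq {y : ℤ → X} {n : ℕ} (hn : 0 < n) (hy : y n = y 0) :
    ∃ z : ℤ → X, z 0 = y 0 ∧ Function.Periodic z n ∧
      chainCost c α z 0 n = chainCost c α y 0 n := by
  have hn' : (0 : ℤ) < n := by exact_mod_cast hn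
  have hagree : ∀ i : ℕ, i ≤ n → y ((i : ℤ) % n) = y i := fun i hi => by
    rcases hi.lt_or_eq with hi | rfl
    · rw [Int.emod_eq_of_lt (by positivity) (by exact_mod_cast hi)]
    · rw [Int.emod_self, hy]
  refine ⟨fun i => y (i % n), by simp, fun i => by simp, sum_congr rfl fun i hi => ?_⟩
  have hi := mem_range.1 hi
  simp only [zero_add]
  rw [hagree i hi.le, show (i : ℤ) + 1 = (i + 1 : ℕ) by push_cast; rfl, hagree (i + 1) hi]

variable (h₀ : ∃ u, Dominated c (critValue c) u)
include h₀

lemma exists_periodic_chainCost_lt {x : X} (hx : Tm c (mane c x) x + critValue c ≤ 0) {ε : ℝ}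
    (hε : 0 < ε) : ∃ (z : ℤ → X) (n : ℕ), 0 < n ∧ z 0 = x ∧ Function.Periodic z n ∧
      chainCost c (critValue c) z 0 n < ε := by
  have : Nonempty X := ⟨x⟩
  obtain ⟨w, hw⟩ : ∃ w, mane c x w + c w x < -critValue c + ε / 2 :=
    exists_lt_of_ciInf_lt (show Tm c (mane c x) x < _ by linarith)
  obtain ⟨y, k, hy0, rfl, hy⟩ := exists_chainCost_lt_mane_add h₀ x w (half_pos hε)
  obtain ⟨z, hz0, hzper, hz⟩ := exists_periodic_chainCost_eq (c := c) (α := critValue c)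
    (y := Function.update y (k + 1) x) (n := k + 1) k.succ_pos
    (by rw [Nat.cast_succ, Function.update_self, Function.update_of_ne (by omega), hy0])
  refine ⟨z, k + 1, k.succ_pos, by rw [hz0, Function.update_of_ne (by omega), hy0], hzper, ?_⟩
  rw [hz, chainCost_update_succ]
  linarith

/-- The chain behind the bound jumps from `b` to `z (m + k + 1)`, follows `z` through `k + 2`
periods less the segment `m - 1, …, m + k + 1`, and jumps from `z (m - 1)` to `a`. -/
lemma mane_le_of_periodic {z : ℤ → X} {n : ℕ}
    (hn : 0 < n) (hz : Function.Periodic z n) (m : ℤ) (k : ℕ) (a b : X) :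
    mane c b a ≤ (c b (z (m + k + 1)) + critValue c) +
      ((k + 2) * chainCost c (critValue c) z 0 n - chainCost c (critValue c) z (m - 1) (k + 2)) +
      (c (z (m - 1)) a + critValue c) := by
  obtain ⟨r, hr⟩ : ∃ r, (k + 2) * n = (k + 2) + r := Nat.exists_eq_add_of_le (by nlinarith)
  have hsplit := chainCost_add (c := c) (α := critValue c) z (m - 1) (k + 2) r
  rw [← hr, chainCost_nat_mul_of_periodic hz] at hsplit
  have hidx : m - 1 + ((k + 2 : ℕ) : ℤ) = m + k + 1 := by push_cast; ring
  have hclose : z (m + k + 1 + r) = z (m - 1) := by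
    rw [← hidx, add_assoc, ← Nat.cast_add, ← hr, Nat.cast_mul]
    exact hz.nat_mul (k + 2) (m - 1)
  have hback := mane_le_chainCost h₀ z (m + k + 1) r
  rw [hclose] at hback
  rw [hidx] at hsplit
  push_cast at hsplit
  linarith [mane_le_mane_add_mane h₀ b (z (m + k + 1)) a,
    mane_le_mane_add_mane h₀ (z (m + k + 1)) (z (m - 1)) a,
    mane_le_cost_add h₀ b (z (m + k + 1)), mane_le_cost_add h₀ (z (m - 1)) a]

end PeriodicChains

section AubryConstruction

variable {X : Type*} [MetricSpace X] {c : X → X → ℝ}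

lemma dist_le_natAbs_mul {y : ℤ → X} {R : ℝ} (h : ∀ i, dist (y i) (y (i + 1)) ≤ R)
    (i : ℤ) :
    dist (y 0) (y i) ≤ i.natAbs * R := by
  induction i using Int.induction_on with
  | zero => simp
  | succ i ih =>
    rw [show ((i : ℤ) + 1).natAbs = i + 1 by omega, Int.natAbs_natCast] at *
    push_cast
    linarith [dist_triangle (y 0) (y i) (y (i + 1)), h i]
  | pred i ih =>
    rw [show (-(i : ℤ) - 1).natAbs = i + 1 by omega]
    rw [show (-(i : ℤ)).natAbs = i by omega] at ih
    push_cast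
    linarith [dist_triangle_right (y 0) (y (-i - 1)) (y (-i)),
      sub_add_cancel (-(i : ℤ)) 1 ▸ h (-i - 1)]

lemma exists_dist_le_of_chainCost_le_one {B K : ℝ} (hK : 0 < K)
    (hlen : IsBLengthSpaceAtScale X B K) (hsl : UniformlySuperlinear c) (hub : UniformlyBounded c)
    (h₀ : ∃ u, Dominated c (critValue c) u) :
    ∃ R, ∀ (z : ℤ → X) (n : ℕ), 0 < n → Function.Periodic z n →
      chainCost c (critValue c) z 0 n ≤ 1 → ∀ i, dist (z i) (z (i + 1)) ≤ R := by
  obtain ⟨u₀, hu₀⟩ := h₀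
  obtain ⟨k, C, hlip⟩ := exists_sub_le_mul_dist_add hK hlen hub (critValue c)
  obtain ⟨C₂, hC₂⟩ := hsl (|k| + 1) (by positivity)
  refine ⟨1 + C + C₂ - critValue c, fun z n hn hz hcost i => ?_⟩
  have hdefect := hu₀.step_defect_le_chainCost hn (hz i)
  rw [chainCost_periodic hz] at hdefect
  have : k * dist (z i) (z (i + 1)) ≤ |k| * dist (z i) (z (i + 1)) := by
    gcongr; exact le_abs_self k
  linarith [hC₂ (z i) (z (i + 1)), hlip u₀ hu₀ (z i) (z (i + 1))]

lemma tendsto_cost (hcont : Continuous fun q : X × X => c q.1 q.2) {ι : Type*} {l : Filter ι}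
    {f g : ι → X} {a b : X} (hf : Tendsto f l (𝓝 a)) (hg : Tendsto g l (𝓝 b)) :
    Tendsto (fun j => c (f j) (g j)) l (𝓝 (c a b)) :=
  (hcont.tendsto (a, b)).comp (hf.prodMk_nhds hg)

lemma tendsto_chainCost (hcont : Continuous fun q : X × X => c q.1 q.2) {ι : Type*}
    {l : Filter ι} {z : ι → ℤ → X} {y : ℤ → X}
    (hy : ∀ i, Tendsto (fun j => z j i) l (𝓝 (y i))) (α : ℝ) (m : ℤ) (k : ℕ) :
    Tendsto (fun j => chainCost c α (z j) m k) l (𝓝 (chainCost c α y m k)) :=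
  tendsto_finsetSum _ fun _ _ => (tendsto_cost hcont (hy _) (hy _)).add_const α

lemma chainCost_add_mane_nonpos_of_tendsto (hcont : Continuous fun q : X × X => c q.1 q.2)
    (h₀ : ∃ u, Dominated c (critValue c) u) {ι : Type*} {l : Filter ι} [l.NeBot]
    {z : ι → ℤ → X} {n : ι → ℕ} {y : ℤ → X} (hn : ∀ j, 0 < n j)
    (hz : ∀ j, Function.Periodic (z j) (n j))
    (hcost : Tendsto (fun j => chainCost c (critValue c) (z j) 0 (n j)) l (𝓝 0))
    (hy : ∀ i, Tendsto (fun j => z j i) l (𝓝 (y i))) (m : ℤ) (k : ℕ) :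
    chainCost c (critValue c) y m k + mane c (y (m + k)) (y m) ≤ 0 := by
  have hfirst :=
    (tendsto_cost hcont (tendsto_const_nhds (x := y (m + k))) (hy (m + k + 1))).add_const
      (critValue c)
  have hperiods := (hcost.const_mul ((k : ℝ) + 2)).sub
    (tendsto_chainCost hcont hy (critValue c) (m - 1) (k + 2))
  have hlast := (tendsto_cost hcont (hy (m - 1)) (tendsto_const_nhds (x := y m))).add_const
    (critValue c)
  have hle := ge_of_tendsto' ((hfirst.add hperiods).add hlast) fun j =>
    mane_le_of_periodic h₀ (hn j) (hz j) m k (y m) (y (m + k))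
  rw [chainCost_sub_one_add_two] at hle
  linarith

end AubryConstruction

lemma mem_projAubrySet_of_tm_mane_add_nonpos {X : Type*} [MetricSpace X] [ProperSpace X]
    {B K : ℝ} (hK : 0 < K) (hlen : IsBLengthSpaceAtScale X B K) {c : X → X → ℝ}
    (hcont : Continuous fun q : X × X => c q.1 q.2) (hsl : UniformlySuperlinear c)
    (hub : UniformlyBounded c) (h₀ : ∃ u, Dominated c (critValue c) u) {x : X}
    (hx : Tm c (mane c x) x + critValue c ≤ 0) : x ∈ projAubrySet c := by
  obtain ⟨u₀, hu₀⟩ := id h₀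
  obtain ⟨R, hR⟩ := exists_dist_le_of_chainCost_le_one hK hlen hsl hub h₀
  choose z n hn hz0 hz hcost using fun j : ℕ =>
    exists_periodic_chainCost_lt h₀ hx (Nat.one_div_pos_of_nat (n := j))
  have hcost_le : ∀ j, chainCost c (critValue c) (z j) 0 (n j) ≤ 1 := fun j =>
    (hcost j).le.trans
      (div_le_one_of_le₀ (by linarith [Nat.cast_nonneg (α := ℝ) j]) (by positivity))
  have hball : ∀ j i, z j i ∈ Metric.closedBall x (i.natAbs * R) := fun j i => by
    rw [Metric.mem_closedBall', ← hz0 j]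
    exact dist_le_natAbs_mul (hR _ _ (hn j) (hz j) (hcost_le j)) i
  obtain ⟨U, hU⟩ := exists_ultrafilter_le (atTop : Filter ℕ)
  obtain ⟨y, hy⟩ := U.exists_tendsto_of_forall_mem_isCompact
    (fun i : ℤ => isCompact_closedBall x (i.natAbs * R)) hball
  have hy0 : y 0 = x := tendsto_nhds_unique (hy 0) (by simp only [hz0]; exact tendsto_const_nhds)
  have hcostU : Tendsto (fun j => chainCost c (critValue c) (z j) 0 (n j)) U (𝓝 0) :=
    tendsto_of_tendsto_of_tendsto_of_le_of_le tendsto_const_nhds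
      ((tendsto_one_div_add_atTop_nhds_zero_nat (𝕜 := ℝ)).mono_left hU)
      (fun j => hu₀.chainCost_nonneg_of_loop (hz j 0)) fun j => (hcost j).le
  intro u hu
  exact ⟨y, isCalibrated_of_chainCost_add_mane_nonpos hu
    (chainCost_add_mane_nonpos_of_tendsto hcont h₀ hn hz hcostU hy), hy0⟩

theorem aubry_iff_mane_weak_KAM_general {X : Type*} [MetricSpace X] [ProperSpace X]
    {B K : ℝ} (hK : 0 < K) (hlen : IsBLengthSpaceAtScale X B K)
    {c : X → X → ℝ} (hcont : Continuous fun q : X × X => c q.1 q.2)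
    (hsl : UniformlySuperlinear c) (hub : UniformlyBounded c) (x : X) :
    x ∈ projAubrySet c ↔ ∀ y : X, mane c x y = Tm c (mane c x) y + critValue c := by
  have : Nonempty X := ⟨x⟩
  have h₀ := exists_dominated_critValue hsl
  rw [forall_mane_eq_tm_add_iff h₀]
  exact ⟨tm_mane_add_nonpos_of_mem_projAubrySet h₀,
    mem_projAubrySet_of_tm_mane_add_nonpos hK hlen hcont hsl hub h₀⟩

theorem aubry_iff_mane_weak_KAM {X : Type*} [MetricSpace X] [Nonempty X] [ProperSpace X]
    {B K : ℝ} (hB : 1 ≤ B) (hK : 0 < K) (hlen : IsBLengthSpaceAtScale X B K)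
    {c : X → X → ℝ} (hcont : Continuous fun q : X × X => c q.1 q.2)
    (hsl : UniformlySuperlinear c) (hub : UniformlyBounded c) (x : X) :
    x ∈ projAubrySet c ↔ ∀ y : X, mane c x y = Tm c (mane c x) y + critValue c :=
  aubry_iff_mane_weak_KAM_general hK hlen hcont hsl hub x
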